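/- arXiv:2309.05144 — 3 statements merged into one kernel-verified Lean document; each statement's English description precedes it below -/
import Mathlib

section
/- Let V, W be complex vector spaces, e₁, e₂ ∈ V linearly independent, and f₁, f₂ ∈ W linearly independent. In the 3-dimensional subspace S = span{ e₁ ⊗ f₁, e₂ ⊗ f₁, e₂ ⊗ f₂ } of V ⊗ W, an element is a simple tensor if and only if it lies in span{e₁, e₂} ⊗ f₁ := { x ⊗ f₁ : x ∈ span{e₁, e₂} } or in e₂ ⊗ span{f₁, f₂} := { e₂ ⊗ y : y ∈ span{f₁, f₂} }. -/
/-!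
Write `t = a • e₁ ⊗ f₁ + b • e₂ ⊗ f₁ + c • e₂ ⊗ f₂`. Pairing `t` with the tensors `φᵢ ⊗ ψⱼ` of the
functionals dual to `e₁, e₂` and `f₁, f₂` reads off its coefficient matrix `[[a, 0], [b, c]]`.
A simple tensor `x ⊗ y` has coefficient matrix `(φᵢ x * ψⱼ y)ᵢⱼ` of rank at most one, so its
determinant `a * c` vanishes: `a = 0` puts `t` in `e₂ ⊗ span {f₁, f₂}`, and `c = 0` puts it in
`span {e₁, e₂} ⊗ f₁`.
-/

open TensorProduct Module

lemma LinearIndependent.exists_dual_apply_eq_ite {K V ι : Type*} [Field K] [AddCommGroup V]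
    [Module K V] [DecidableEq ι] {v : ι → V} (hv : LinearIndependent K v) :
    ∃ φ : ι → Dual K V, ∀ i j, φ i (v j) = if i = j then 1 else 0 := by
  obtain ⟨g, hg⟩ := LinearMap.exists_extend hv.repr
  refine ⟨fun i ↦ Finsupp.lapply i ∘ₗ g, fun i j ↦ ?_⟩
  have hgv : g (v j) = Finsupp.single j 1 := by
    rw [← hv.repr_eq_single j ⟨v j, Submodule.subset_span ⟨j, rfl⟩⟩ rfl, ← hg]
    rfl
  simp [hgv, Finsupp.single_apply, eq_comm]

lemma TensorProduct.dualDistrib_mul_dualDistrib_tmul_comm {R M N : Type*} [CommSemiring R]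
    [AddCommMonoid M] [Module R M] [AddCommMonoid N] [Module R N]
    (φ₁ φ₂ : Dual R M) (ψ₁ ψ₂ : Dual R N) (x : M) (y : N) :
    dualDistrib R M N (φ₁ ⊗ₜ ψ₁) (x ⊗ₜ y) * dualDistrib R M N (φ₂ ⊗ₜ ψ₂) (x ⊗ₜ y) =
      dualDistrib R M N (φ₁ ⊗ₜ ψ₂) (x ⊗ₜ y) * dualDistrib R M N (φ₂ ⊗ₜ ψ₁) (x ⊗ₜ y) := by
  simp only [dualDistrib_apply]
  ring

lemma mul_eq_zero_of_smul_tmul_add_eq_tmul {K V W : Type*} [Field K] [AddCommGroup V]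
    [Module K V] [AddCommGroup W] [Module K W] {e₁ e₂ : V} {f₁ f₂ : W}
    (he : LinearIndependent K ![e₁, e₂]) (hf : LinearIndependent K ![f₁, f₂])
    {a b c : K} {x : V} {y : W}
    (h : a • e₁ ⊗ₜ[K] f₁ + b • e₂ ⊗ₜ[K] f₁ + c • e₂ ⊗ₜ[K] f₂ = x ⊗ₜ y) : a * c = 0 := by
  obtain ⟨φ, hφ⟩ := he.exists_dual_apply_eq_ite
  obtain ⟨ψ, hψ⟩ := hf.exists_dual_apply_eq_ite
  have hcoeff : ∀ i j, dualDistrib K V W (φ i ⊗ₜ ψ j) (x ⊗ₜ y) =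
      a * (φ i e₁ * ψ j f₁) + b * (φ i e₂ * ψ j f₁) + c * (φ i e₂ * ψ j f₂) := by
    intro i j
    simp [← h]
  have hminor := dualDistrib_mul_dualDistrib_tmul_comm (φ 0) (φ 1) (ψ 0) (ψ 1) x y
  simp_all

theorem stmt_11 {V W : Type*} [AddCommGroup V] [Module ℂ V]
    [AddCommGroup W] [Module ℂ W]
    (e1 e2 : V) (f1 f2 : W)
    (he : LinearIndependent ℂ ![e1, e2])
    (hf : LinearIndependent ℂ ![f1, f2])
    (t : V ⊗[ℂ] W)
    (ht : t ∈ Submodule.span ℂ {e1 ⊗ₜ[ℂ] f1, e2 ⊗ₜ[ℂ] f1, e2 ⊗ₜ[ℂ] f2}) :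
    (∃ (x : V) (y : W), t = x ⊗ₜ[ℂ] y) ↔
      ((∃ x ∈ Submodule.span ℂ {e1, e2}, t = x ⊗ₜ[ℂ] f1) ∨
       (∃ y ∈ Submodule.span ℂ {f1, f2}, t = e2 ⊗ₜ[ℂ] y)) := by
  constructor
  · rintro ⟨x, y, rfl⟩
    obtain ⟨a, b, c, habc⟩ := Submodule.mem_span_triple.mp ht
    rcases mul_eq_zero.mp (mul_eq_zero_of_smul_tmul_add_eq_tmul he hf habc) with rfl | rfl
    · refine .inr ⟨b • f1 + c • f2, Submodule.mem_span_pair.mpr ⟨b, c, rfl⟩, ?_⟩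
      simp [← habc, tmul_add, smul_tmul']
    · refine .inl ⟨a • e1 + b • e2, Submodule.mem_span_pair.mpr ⟨a, b, rfl⟩, ?_⟩
      simp [← habc, add_tmul, smul_tmul']
  · rintro (⟨x, -, rfl⟩ | ⟨y, -, rfl⟩)
    exacts [⟨x, f1, rfl⟩, ⟨e2, y, rfl⟩]
end

section
/- Let a, b, c, d ∈ ℂ be nonzero with a·d ≠ b·c. Define L : ℂ² → ℂ² by L(e₁) = f₁ and L(e₂) = (a·d/(b·c))·f₂ (identifying the second tensor factor's basis f₁, f₂ with a basis of ℂ²). Then the set of nonzero simple tensors in span{ e₁ ⊗ f₁, e₂ ⊗ f₂, (a·e₁ + b·e₂) ⊗ (c·f₁ + d·f₂) } ⊆ ℂ² ⊗ ℂ² is exactly { γ · (ψ ⊗ L(ψ)) : ψ ∈ ℂ², ψ ≠ 0, γ ∈ ℂ, γ ≠ 0 }. -/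
/-!
Write `r = ad/(bc)`. Since `b, c ≠ 0`, the span of the three tensors is exactly the kernel of the
functional `t ↦ r t₁₀ - t₀₁`: one solves for the coefficients of a kernel element directly. On
`x ⊗ y` this functional is the determinant of the columns `L x = (x₀, r x₁)` and `y`, so a nonzero
simple tensor `x ⊗ y` lies in the span iff `y` is a nonzero multiple of `L x`.
-/

open TensorProduct Matrix

section Coordinates

variable {K : Type*} [Field K] {ι κ : Type*} [Finite ι] [Finite κ]

noncomputable def tensorCoord (i : ι) (j : κ) : (ι → K) ⊗[K] (κ → K) →ₗ[K] K :=
  ((Pi.basisFun K ι).tensorProduct (Pi.basisFun K κ)).coord (i, j)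

@[simp]
lemma tensorCoord_tmul (i : ι) (j : κ) (x : ι → K) (y : κ → K) :
    tensorCoord i j (x ⊗ₜ[K] y) = x i * y j := by
  simp [tensorCoord, mul_comm]

lemma tmul_ne_zero_of_ne_zero {x : ι → K} {y : κ → K} (hx : x ≠ 0) (hy : y ≠ 0) :
    x ⊗ₜ[K] y ≠ 0 := by
  obtain ⟨i, hi⟩ : ∃ i, x i ≠ 0 := Function.ne_iff.mp hx
  obtain ⟨j, hj⟩ : ∃ j, y j ≠ 0 := Function.ne_iff.mp hy
  intro h
  simpa [hi, hj] using congrArg (tensorCoord i j) h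

lemma eq_sum_tensorCoord_smul [Fintype ι] [Fintype κ] [DecidableEq ι] [DecidableEq κ]
    (t : (ι → K) ⊗[K] (κ → K)) :
    t = ∑ i, ∑ j, tensorCoord i j t • (Pi.single i 1 ⊗ₜ[K] Pi.single j 1) := by
  conv_lhs => rw [← ((Pi.basisFun K ι).tensorProduct (Pi.basisFun K κ)).sum_repr t]
  rw [Fintype.sum_prod_type]
  simp only [Module.Basis.tensorProduct_apply, Pi.basisFun_apply, tensorCoord,
    Module.Basis.coord_apply]

end Coordinates

lemma diagonal_mulVec_ne_zero {K n : Type*} [Field K] [Fintype n] [DecidableEq n] {v x : n → K}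
    (hv : ∀ i, v i ≠ 0) (hx : x ≠ 0) : diagonal v *ᵥ x ≠ 0 := by
  obtain ⟨i, hi⟩ : ∃ i, x i ≠ 0 := Function.ne_iff.mp hx
  intro h
  simpa [mulVec_diagonal, hv i, hi] using congrFun h i

section TwoByTwo

variable {K : Type*} [Field K]

noncomputable def crossForm (r : K) : (Fin 2 → K) ⊗[K] (Fin 2 → K) →ₗ[K] K :=
  r • tensorCoord 1 0 - tensorCoord 0 1

@[simp]
lemma crossForm_tmul (r : K) (x y : Fin 2 → K) :
    crossForm r (x ⊗ₜ[K] y) = r * (x 1 * y 0) - x 0 * y 1 := by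
  simp [crossForm]

lemma span_eq_ker_crossForm {a b c d : K} (hb : b ≠ 0) (hc : c ≠ 0) :
    Submodule.span K
        {Pi.single 0 1 ⊗ₜ[K] Pi.single 0 1, Pi.single 1 1 ⊗ₜ[K] Pi.single 1 1,
          (a • Pi.single 0 1 + b • Pi.single 1 1 : Fin 2 → K) ⊗ₜ[K]
            (c • Pi.single 0 1 + d • Pi.single 1 1 : Fin 2 → K)} =
      LinearMap.ker (crossForm (a * d / (b * c))) := by
  apply le_antisymm
  · rw [Submodule.span_le]
    rintro t (rfl | rfl | rfl) <;> simp [hb, hc]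
  · intro t ht
    have h01 : tensorCoord 0 1 t = a * d / (b * c) * tensorCoord 1 0 t := by
      rw [LinearMap.mem_ker, crossForm, LinearMap.sub_apply, LinearMap.smul_apply, smul_eq_mul,
        sub_eq_zero] at ht
      exact ht.symm
    refine Submodule.mem_span_triple.mpr ⟨tensorCoord 0 0 t - a / b * tensorCoord 1 0 t,
      tensorCoord 1 1 t - d / c * tensorCoord 1 0 t, tensorCoord 1 0 t / (b * c), ?_⟩
    conv_rhs => rw [eq_sum_tensorCoord_smul t]
    simp only [Fin.sum_univ_two, h01, tmul_add, add_tmul, smul_tmul, tmul_smul, smul_add, smul_smul]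
    match_scalars <;> field_simp <;> ring

lemma exists_eq_smul_of_mul_eq_mul {w y : Fin 2 → K} (hw : w ≠ 0)
    (h : w 0 * y 1 = w 1 * y 0) : ∃ γ : K, y = γ • w := by
  by_cases hw0 : w 0 = 0
  · have hw1 : w 1 ≠ 0 := fun hw1 => hw (funext (Fin.forall_fin_two.mpr ⟨hw0, hw1⟩))
    refine ⟨y 1 / w 1, funext (Fin.forall_fin_two.mpr ⟨?_, ?_⟩)⟩
    · simpa [hw0, hw1, eq_comm] using h
    · simp only [Pi.smul_apply, smul_eq_mul]
      field_simp
  · refine ⟨y 0 / w 0, funext (Fin.forall_fin_two.mpr ⟨?_, ?_⟩)⟩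
    · simp only [Pi.smul_apply, smul_eq_mul]
      field_simp
    · simp only [Pi.smul_apply, smul_eq_mul]
      field_simp
      linear_combination h

lemma eq_toLin'_diagonal {r : K} (L : (Fin 2 → K) →ₗ[K] (Fin 2 → K))
    (h0 : L (Pi.single 0 1) = Pi.single 0 1) (h1 : L (Pi.single 1 1) = r • Pi.single 1 1) :
    L = toLin' (diagonal ![1, r]) := by
  refine LinearMap.pi_ext' fun i => LinearMap.ext_ring ?_
  fin_cases i
  · simp [h0]
  · simp [h1, ← Pi.single_smul']

end TwoByTwo

theorem stmt_12_general (a b c d : ℂ)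
    (ha : a ≠ 0) (hb : b ≠ 0) (hc : c ≠ 0) (hd : d ≠ 0)
    (e : Fin 2 → (Fin 2 → ℂ)) (f : Fin 2 → (Fin 2 → ℂ))
    (he : ∀ i, e i = Pi.single i 1) (hf : ∀ i, f i = Pi.single i 1)
    (L : (Fin 2 → ℂ) →ₗ[ℂ] (Fin 2 → ℂ))
    (hL1 : L (e 0) = f 0) (hL2 : L (e 1) = (a * d / (b * c)) • f 1) :
    {t : (Fin 2 → ℂ) ⊗[ℂ] (Fin 2 → ℂ) |
        t ∈ Submodule.span ℂ
          {e 0 ⊗ₜ[ℂ] f 0, e 1 ⊗ₜ[ℂ] f 1,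
            (a • e 0 + b • e 1) ⊗ₜ[ℂ] (c • f 0 + d • f 1)} ∧
        t ≠ 0 ∧ (∃ (x y : Fin 2 → ℂ), t = x ⊗ₜ[ℂ] y)}
    = {t | ∃ (ψ : Fin 2 → ℂ) (γ : ℂ), ψ ≠ 0 ∧ γ ≠ 0 ∧ t = γ • (ψ ⊗ₜ[ℂ] L ψ)} := by
  obtain rfl : e = (Pi.single · 1) := funext he
  obtain rfl : f = (Pi.single · 1) := funext hf
  obtain rfl := eq_toLin'_diagonal L hL1 hL2
  rw [span_eq_ker_crossForm hb hc]
  set r := a * d / (b * c)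
  have hdiag : ∀ i, ![1, r] i ≠ 0 :=
    Fin.forall_fin_two.mpr ⟨one_ne_zero, div_ne_zero (mul_ne_zero ha hd) (mul_ne_zero hb hc)⟩
  ext t
  constructor
  · rintro ⟨ht, hne, x, y, rfl⟩
    have hx : x ≠ 0 := by rintro rfl; simp at hne
    have hy : y ≠ 0 := by rintro rfl; simp at hne
    rw [LinearMap.mem_ker, crossForm_tmul] at ht
    have hparallel : (diagonal ![1, r] *ᵥ x) 0 * y 1 = (diagonal ![1, r] *ᵥ x) 1 * y 0 := by
      simp only [mulVec_diagonal, cons_val_zero, cons_val_one, one_mul]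
      linear_combination -ht
    obtain ⟨γ, rfl⟩ := exists_eq_smul_of_mul_eq_mul (diagonal_mulVec_ne_zero hdiag hx) hparallel
    exact ⟨x, γ, hx, by rintro rfl; simp at hy, tmul_smul _ _ _⟩
  · rintro ⟨ψ, γ, hψ, hγ, rfl⟩
    refine ⟨?_, smul_ne_zero hγ (tmul_ne_zero_of_ne_zero hψ (diagonal_mulVec_ne_zero hdiag hψ)),
      ψ, γ • _, (tmul_smul _ _ _).symm⟩
    rw [LinearMap.mem_ker, map_smul, crossForm_tmul]
    simp only [toLin'_apply, mulVec_diagonal, cons_val_zero, cons_val_one, one_mul, smul_eq_mul]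
    ring

theorem stmt_12 (a b c d : ℂ)
    (ha : a ≠ 0) (hb : b ≠ 0) (hc : c ≠ 0) (hd : d ≠ 0)
    (habcd : a * d ≠ b * c)
    (e : Fin 2 → (Fin 2 → ℂ)) (f : Fin 2 → (Fin 2 → ℂ))
    (he : ∀ i, e i = Pi.single i 1) (hf : ∀ i, f i = Pi.single i 1)
    (L : (Fin 2 → ℂ) →ₗ[ℂ] (Fin 2 → ℂ))
    (hL1 : L (e 0) = f 0) (hL2 : L (e 1) = (a * d / (b * c)) • f 1) :
    {t : (Fin 2 → ℂ) ⊗[ℂ] (Fin 2 → ℂ) |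
        t ∈ Submodule.span ℂ
          {e 0 ⊗ₜ[ℂ] f 0, e 1 ⊗ₜ[ℂ] f 1,
            (a • e 0 + b • e 1) ⊗ₜ[ℂ] (c • f 0 + d • f 1)} ∧
        t ≠ 0 ∧ (∃ (x y : Fin 2 → ℂ), t = x ⊗ₜ[ℂ] y)}
    = {t | ∃ (ψ : Fin 2 → ℂ) (γ : ℂ), ψ ≠ 0 ∧ γ ≠ 0 ∧ t = γ • (ψ ⊗ₜ[ℂ] L ψ)} :=
  stmt_12_general a b c d ha hb hc hd e f he hf L hL1 hL2
end

section
/- Let U, V, W be complex vector spaces. Suppose u₁, u₂, u₃ ∈ U are pairwise linearly independent (any two are linearly independent) but linearly dependent, and suppose v₁, v₂, v₃ ∈ V are also pairwise linearly independent but linearly dependent. Then for any nonzero w₁, w₂, w₃ ∈ W, the three tensors u₁ ⊗ v₁, u₂ ⊗ v₂, u₃ ⊗ v₃ ∈ U ⊗ V are linearly independent. -/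
/-!
Write `u₃ = a • u₁ + b • u₂` and `v₃ = c • v₁ + d • v₂`; pairwise independence forces `a ≠ 0`
and `d ≠ 0`. Pick functionals `f₁, f₂` on `U` and `g₁, g₂` on `V` dual to `u₁, u₂` and `v₁, v₂`.
Of the three tensors only `u₃ ⊗ v₃` pairs nontrivially with `f₁ ⊗ g₂` (with value `a * d`), so it
carries no coefficient in a vanishing combination, and `f₁ ⊗ g₁`, `f₂ ⊗ g₂` then kill the other two.
-/

open TensorProduct

section

open Module

variable {K U V : Type*} [Field K] [AddCommGroup U] [Module K U] [AddCommGroup V] [Module K V]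

theorem LinearIndependent.exists_dual_apply_eq_single {ι : Type*} {u : ι → U}
    (hu : LinearIndependent K u) :
    ∃ f : ι → Dual K U, ∀ i j, f i (u j) = Finsupp.single j 1 i := by
  choose f hf using fun i ↦ LinearMap.exists_extend (Finsupp.lapply i ∘ₗ hu.repr)
  refine ⟨f, fun i j ↦ ?_⟩
  have hj : u j ∈ Submodule.span K (Set.range u) := Submodule.subset_span ⟨j, rfl⟩
  simpa [hu.repr_eq_single j ⟨u j, hj⟩ rfl] using LinearMap.congr_fun (hf i) ⟨u j, hj⟩

theorem exists_eq_smul_add_smul_of_not_linearIndependent {u₁ u₂ u₃ : U}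
    (h₁₂ : LinearIndependent K ![u₁, u₂]) (h : ¬ LinearIndependent K ![u₁, u₂, u₃]) :
    ∃ a b : K, u₃ = a • u₁ + b • u₂ := by
  have hu₃ : u₃ ∈ Submodule.span K {u₁, u₂} := by
    by_contra hu₃
    exact h (by simpa using h₁₂.finSnoc (x := u₃) (by simpa [Set.pair_comm] using hu₃))
  obtain ⟨a, b, hab⟩ := Submodule.mem_span_pair.1 hu₃
  exact ⟨a, b, hab.symm⟩

theorem left_coeff_ne_zero_of_linearIndependent {x y : U} {a b : K}
    (h : LinearIndependent K ![x, a • y + b • x]) : a ≠ 0 := by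
  rintro rfl
  simpa using (LinearIndependent.pair_iff.1 h b (-1) (by simp)).2

theorem linearIndependent_tmul_tmul_tmul_smul_add_smul {u₁ u₂ : U} {v₁ v₂ : V}
    (hu : LinearIndependent K ![u₁, u₂]) (hv : LinearIndependent K ![v₁, v₂])
    {a b c d : K} (ha : a ≠ 0) (hd : d ≠ 0) :
    LinearIndependent K
      ![u₁ ⊗ₜ[K] v₁, u₂ ⊗ₜ[K] v₂, (a • u₁ + b • u₂) ⊗ₜ[K] (c • v₁ + d • v₂)] := by
  obtain ⟨f, hf⟩ := hu.exists_dual_apply_eq_single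
  obtain ⟨g, hg⟩ := hv.exists_dual_apply_eq_single
  simp only [Fin.forall_fin_two, Matrix.cons_val_zero, Matrix.cons_val_one,
    Finsupp.single_eq_same, ne_eq, zero_ne_one, one_ne_zero, not_false_eq_true,
    Finsupp.single_eq_of_ne] at hf hg
  rw [Fintype.linearIndependent_iff]
  intro k hk
  have hkfg (i j : Fin 2) := congr(dualDistrib K U V (f i ⊗ₜ g j) $hk)
  simp only [Fin.sum_univ_three, map_add, map_smul, map_zero, Matrix.cons_val,
    dualDistrib_apply, smul_eq_mul] at hkfg
  have hk₂ : k 2 = 0 := by simpa [hf, hg, ha, hd] using hkfg 0 1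
  have hk₀ : k 0 = 0 := by simpa [hf, hg, hk₂] using hkfg 0 0
  have hk₁ : k 1 = 0 := by simpa [hf, hg, hk₂] using hkfg 1 1
  exact Fin.forall_fin_succ.2 ⟨hk₀, Fin.forall_fin_two.2 ⟨hk₁, hk₂⟩⟩

end

theorem stmt_14_general {U V : Type*} [AddCommGroup U] [Module ℂ U]
    [AddCommGroup V] [Module ℂ V]
    (u1 u2 u3 : U) (v1 v2 v3 : V)
    (hu12 : LinearIndependent ℂ ![u1, u2])
    (hu23 : LinearIndependent ℂ ![u2, u3])
    (hu : ¬ LinearIndependent ℂ ![u1, u2, u3])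
    (hv12 : LinearIndependent ℂ ![v1, v2])
    (hv13 : LinearIndependent ℂ ![v1, v3])
    (hv : ¬ LinearIndependent ℂ ![v1, v2, v3]) :
    LinearIndependent ℂ ![u1 ⊗ₜ[ℂ] v1, u2 ⊗ₜ[ℂ] v2, u3 ⊗ₜ[ℂ] v3] := by
  obtain ⟨a, b, rfl⟩ := exists_eq_smul_add_smul_of_not_linearIndependent hu12 hu
  obtain ⟨c, d, rfl⟩ := exists_eq_smul_add_smul_of_not_linearIndependent hv12 hv
  rw [add_comm] at hv13
  exact linearIndependent_tmul_tmul_tmul_smul_add_smul hu12 hv12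
    (left_coeff_ne_zero_of_linearIndependent hu23) (left_coeff_ne_zero_of_linearIndependent hv13)

theorem stmt_14 {U V W : Type*} [AddCommGroup U] [Module ℂ U]
    [AddCommGroup V] [Module ℂ V] [AddCommGroup W] [Module ℂ W]
    (u1 u2 u3 : U) (v1 v2 v3 : V) (w1 w2 w3 : W)
    (hu12 : LinearIndependent ℂ ![u1, u2])
    (hu13 : LinearIndependent ℂ ![u1, u3])
    (hu23 : LinearIndependent ℂ ![u2, u3])
    (hu : ¬ LinearIndependent ℂ ![u1, u2, u3])
    (hv12 : LinearIndependent ℂ ![v1, v2])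
    (hv13 : LinearIndependent ℂ ![v1, v3])
    (hv23 : LinearIndependent ℂ ![v2, v3])
    (hv : ¬ LinearIndependent ℂ ![v1, v2, v3])
    (hw1 : w1 ≠ 0) (hw2 : w2 ≠ 0) (hw3 : w3 ≠ 0) :
    LinearIndependent ℂ ![u1 ⊗ₜ[ℂ] v1, u2 ⊗ₜ[ℂ] v2, u3 ⊗ₜ[ℂ] v3] :=
  stmt_14_general u1 u2 u3 v1 v2 v3 hu12 hu23 hu hv12 hv13 hv
end
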